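/- arXiv:1703.06640 — 5 statements merged into one kernel-verified Lean document; each statement's English description precedes it below -/
import Mathlib

section
/- If each f_n commutes with f, each f_n is surjective, and Σ_{n=1}^∞ D(f_n, f) < ∞, then for every ε > 0 there exists n₀ ∈ ℕ such that for all n ≥ n₀ and all k ∈ ℕ, D(ω^n_{n+k}, f^k) < ε, where ω^n_{n+k} = f_{n+k} ∘ ... ∘ f_{n+1}. (Collective convergence of the tail compositions to the iterates of f.) -/
open Filter Metric Set

noncomputable def supD {X : Type*} [MetricSpace X] (g h : X → X) : ℝ :=
  ⨆ x, dist (g x) (h x)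

def omega {X : Type*} (fn : ℕ → X → X) : ℕ → X → X
  | 0 => id
  | k + 1 => fn (k + 1) ∘ omega fn k

def omegaSeg {X : Type*} (fn : ℕ → X → X) (n : ℕ) : ℕ → X → X
  | 0 => id
  | k + 1 => fn (n + k + 1) ∘ omegaSeg fn n k

section Aux

variable {X : Type*} [MetricSpace X] [CompactSpace X] [Nonempty X]

lemma bddD (g h : X → X) : BddAbove (Set.range fun x => dist (g x) (h x)) := by
  obtain ⟨C, hC⟩ := Metric.isBounded_iff.mp (isCompact_univ (X := X)).isBounded
  exact ⟨C, by rintro _ ⟨x, rfl⟩; exact hC (Set.mem_univ _) (Set.mem_univ _)⟩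

lemma dist_le_supD (g h : X → X) (x : X) : dist (g x) (h x) ≤ supD g h :=
  le_ciSup (bddD g h) x

lemma supD_nonneg (g h : X → X) : 0 ≤ supD g h := by
  obtain ⟨x⟩ := ‹Nonempty X›
  exact le_trans dist_nonneg (dist_le_supD g h x)

lemma omegaSeg_shift (fn : ℕ → X → X) :
    ∀ k n (x : X), omegaSeg fn n (k + 1) x = omegaSeg fn (n + 1) k (fn (n + 1) x) := by
  intro k
  induction k with
  | zero => intro n x; rfl
  | succ k ih =>
      intro n x
      show fn (n + (k + 1) + 1) (omegaSeg fn n (k + 1) x) = _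
      rw [ih n x]
      show _ = fn ((n + 1) + k + 1) (omegaSeg fn (n + 1) k (fn (n + 1) x))
      congr 1
      omega

lemma iterate_comm {f : X → X} {fn : ℕ → X → X}
    (hcomm : ∀ n, fn n ∘ f = f ∘ fn n) (m k : ℕ) (x : X) :
    f^[k] (fn m x) = fn m (f^[k] x) := by
  induction k generalizing x with
  | zero => rfl
  | succ k ih =>
      rw [Function.iterate_succ_apply, Function.iterate_succ_apply]
      rw [show f (fn m x) = fn m (f x) from (congrFun (hcomm m) x).symm, ih]

lemma key_bound {f : X → X} {fn : ℕ → X → X}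
    (hcomm : ∀ n, fn n ∘ f = f ∘ fn n) :
    ∀ k n (x : X), dist (omegaSeg fn n k x) (f^[k] x) ≤
      ∑ j ∈ Finset.range k, supD (fn (n + j + 1)) f := by
  intro k
  induction k with
  | zero => intro n x; simp [omegaSeg]
  | succ k ih =>
      intro n x
      rw [omegaSeg_shift fn k n x, Function.iterate_succ_apply]
      calc dist (omegaSeg fn (n + 1) k (fn (n + 1) x)) (f^[k] (f x))
          ≤ dist (omegaSeg fn (n + 1) k (fn (n + 1) x)) (f^[k] (fn (n + 1) x))
            + dist (f^[k] (fn (n + 1) x)) (f^[k] (f x)) := dist_triangle _ _ _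
        _ ≤ (∑ j ∈ Finset.range k, supD (fn ((n + 1) + j + 1)) f)
            + supD (fn (n + 1)) f := by
            refine add_le_add (ih (n + 1) (fn (n + 1) x)) ?_
            rw [iterate_comm hcomm, ← Function.iterate_succ_apply,
              Function.iterate_succ_apply']
            exact dist_le_supD _ _ _
        _ = ∑ j ∈ Finset.range (k + 1), supD (fn (n + j + 1)) f := by
            rw [Finset.sum_range_succ' (fun j => supD (fn (n + j + 1)) f) k]
            congr 1
            · refine Finset.sum_congr rfl fun j _ => ?_
              rw [show (n + 1) + j + 1 = n + (j + 1) + 1 by omega]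

end Aux

theorem stmt2 {X : Type*} [MetricSpace X] [CompactSpace X] [Nonempty X]
    (f : X → X) (fn : ℕ → X → X)
    (hf : Continuous f) (hfn : ∀ n, Continuous (fn n))
    (hcomm : ∀ n, fn n ∘ f = f ∘ fn n)
    (hsurj : ∀ n, Function.Surjective (fn n))
    (hsum : Summable fun n => supD (fn (n + 1)) f) :
    ∀ ε > 0, ∃ n₀ : ℕ, ∀ n ≥ n₀, ∀ k : ℕ, supD (omegaSeg fn n k) (f^[k]) < ε := by
  intro ε hε
  set a : ℕ → ℝ := fun m => supD (fn (m + 1)) f with ha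
  have htail : Tendsto (fun i => ∑' m, a (m + i)) atTop (nhds 0) :=
    tendsto_sum_nat_add a
  have hev := htail.eventually (eventually_lt_nhds hε)
  obtain ⟨n₀, hn₀⟩ := eventually_atTop.mp hev
  refine ⟨n₀, fun n hn k => ?_⟩
  have hsum' : Summable fun m => a (m + n) := (summable_nat_add_iff n).mpr hsum
  have h1 : supD (omegaSeg fn n k) (f^[k]) ≤ ∑ j ∈ Finset.range k, a (j + n) := by
    refine ciSup_le fun x => ?_
    refine le_trans (key_bound hcomm k n x) (le_of_eq ?_)
    refine Finset.sum_congr rfl fun j _ => ?_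
    simp only [ha]
    rw [show n + j + 1 = j + n + 1 by omega]
  have h2 : ∑ j ∈ Finset.range k, a (j + n) ≤ ∑' m, a (m + n) :=
    Summable.sum_le_tsum _ (fun i _ => supD_nonneg _ _) hsum'
  exact lt_of_le_of_lt (h1.trans h2) (hn₀ n hn)
end

section
/- If each f_n commutes with f, each f_n is surjective, Σ_{n=1}^∞ D(f_n, f) < ∞, and (X, f) is minimal (every f-orbit is dense), then the non-autonomous system (X, F) is minimal, i.e., for every x ∈ X the set {ω_n(x) : n ∈ ℕ} is dense in X. -/
open Filter Metric Set

lemma le_supD {X : Type*} [MetricSpace X] [CompactSpace X] {g h : X → X}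
    (hg : Continuous g) (hh : Continuous h) (x : X) :
    dist (g x) (h x) ≤ supD g h := by
  have hb : BddAbove (Set.range fun x => dist (g x) (h x)) :=
    (isCompact_range (hg.dist hh)).bddAbove
  exact le_ciSup hb x

lemma omega_add {X : Type*} (fn : ℕ → X → X) (n : ℕ) :
    ∀ (k : ℕ) (x : X), omega fn (n + k) x = omegaSeg fn n k (omega fn n x) := by
  intro k
  induction k with
  | zero => intro x; rfl
  | succ k ih =>
    intro x
    show omega fn (n + k + 1) x = _
    simp only [omega, omegaSeg, Function.comp_apply, ih]

lemma omegaSeg_succ_left {X : Type*} (fn : ℕ → X → X) :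
    ∀ (k n : ℕ), omegaSeg fn n (k + 1) = omegaSeg fn (n + 1) k ∘ fn (n + 1) := by
  intro k
  induction k with
  | zero => intro n; simp [omegaSeg]
  | succ k ih =>
    intro n
    show fn (n + (k + 1) + 1) ∘ omegaSeg fn n (k + 1) = _
    rw [ih n]
    show fn (n + (k + 1) + 1) ∘ (omegaSeg fn (n + 1) k ∘ fn (n + 1))
        = (fn ((n + 1) + k + 1) ∘ omegaSeg fn (n + 1) k) ∘ fn (n + 1)
    have : n + (k + 1) + 1 = (n + 1) + k + 1 := by ring
    rw [this, Function.comp_assoc]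

lemma segBound {X : Type*} [MetricSpace X] [CompactSpace X]
    (f : X → X) (fn : ℕ → X → X)
    (hf : Continuous f) (hfn : ∀ n, Continuous (fn n))
    (hcomm : ∀ n, fn n ∘ f = f ∘ fn n) :
    ∀ (k n : ℕ) (z : X),
      dist (omegaSeg fn n k z) (f^[k] z) ≤ ∑ j ∈ Finset.range k, supD (fn (n + j + 1)) f := by
  have hc : ∀ m, Function.Commute (fn m) f := fun m a => congrFun (hcomm m) a
  intro k
  induction k with
  | zero => intro n z; simp [omegaSeg]
  | succ k ih =>
    intro n z
    rw [omegaSeg_succ_left]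
    have h1 : dist (omegaSeg fn (n + 1) k (fn (n + 1) z)) (f^[k] (fn (n + 1) z))
        ≤ ∑ j ∈ Finset.range k, supD (fn ((n + 1) + j + 1)) f := ih (n + 1) (fn (n + 1) z)
    have hcom : f^[k] (fn (n + 1) z) = fn (n + 1) (f^[k] z) :=
      (((hc (n + 1)).iterate_right k) z).symm
    have h2 : dist (f^[k] (fn (n + 1) z)) (f^[k + 1] z) ≤ supD (fn (n + 1)) f := by
      rw [hcom, Function.iterate_succ_apply']
      exact le_supD (hfn (n + 1)) hf (f^[k] z)
    calc dist ((omegaSeg fn (n + 1) k ∘ fn (n + 1)) z) (f^[k + 1] z)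
        ≤ dist (omegaSeg fn (n + 1) k (fn (n + 1) z)) (f^[k] (fn (n + 1) z))
          + dist (f^[k] (fn (n + 1) z)) (f^[k + 1] z) := dist_triangle _ _ _
      _ ≤ (∑ j ∈ Finset.range k, supD (fn ((n + 1) + j + 1)) f) + supD (fn (n + 1)) f :=
          add_le_add h1 h2
      _ = ∑ j ∈ Finset.range (k + 1), supD (fn (n + j + 1)) f := by
          rw [Finset.sum_range_succ']
          congr 1
          apply Finset.sum_congr rfl
          intro j _
          congr 2
          ring

theorem stmt5 {X : Type*} [MetricSpace X] [CompactSpace X] [Nonempty X]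
    (f : X → X) (fn : ℕ → X → X)
    (hf : Continuous f) (hfsurj : Function.Surjective f)
    (hfn : ∀ n, Continuous (fn n))
    (hsurj : ∀ n, Function.Surjective (fn n))
    (hcomm : ∀ n, fn n ∘ f = f ∘ fn n)
    (hsum : Summable fun n => supD (fn (n + 1)) f)
    (hmin : ∀ x : X, Dense (Set.range fun n : ℕ => f^[n] x)) :
    ∀ x : X, Dense (Set.range fun n : ℕ => omega fn n x) := by
  intro x
  rw [Metric.dense_iff]
  intro y ε hε
  set S : ℕ → ℝ := fun n => ∑ i ∈ Finset.range n, supD (fn (i + 1)) f with hS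
  have hca : CauchySeq S := hsum.hasSum.tendsto_sum_nat.cauchySeq
  obtain ⟨N, hN⟩ := Metric.cauchySeq_iff'.mp hca (ε / 2) (half_pos hε)
  have tail : ∀ k, ∑ j ∈ Finset.range k, supD (fn (N + j + 1)) f < ε / 2 := by
    intro k
    have h1 : S (N + k) - S N = ∑ j ∈ Finset.range k, supD (fn (N + j + 1)) f := by
      rw [hS]
      simp only
      rw [Finset.sum_range_add]
      exact add_sub_cancel_left _ _
    have h2 := hN (N + k) (Nat.le_add_right N k)
    rw [Real.dist_eq] at h2
    calc ∑ j ∈ Finset.range k, supD (fn (N + j + 1)) f = S (N + k) - S N := h1.symm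
      _ ≤ |S (N + k) - S N| := le_abs_self _
      _ < ε / 2 := h2
  set z := omega fn N x with hz
  obtain ⟨w, hw1, hw2⟩ := Metric.dense_iff.mp (hmin z) y (ε / 2) (half_pos hε)
  obtain ⟨m, hm⟩ := hw2
  refine ⟨omega fn (N + m) x, ?_, ⟨N + m, rfl⟩⟩
  rw [mem_ball]
  calc dist (omega fn (N + m) x) y
      ≤ dist (omega fn (N + m) x) (f^[m] z) + dist (f^[m] z) y := dist_triangle _ _ _
    _ < ε / 2 + ε / 2 := by
        apply add_lt_add_of_le_of_lt
        · rw [omega_add fn N m x, ← hz]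
          exact (segBound f fn hf hfn hcomm m N z).trans (tail m).le
        · have hm' : f^[m] z = w := hm
          rw [hm']; rw [mem_ball] at hw1; exact hw1
    _ = ε := add_halves ε
end

section
/- There exists a sequence of rotations f_n of the unit circle S¹, f_n(θ) = θ + 1/n², converging uniformly to the identity map, such that every point of S¹ is periodic for the identity but the non-autonomous system generated by (f_n) has no periodic point (since Σ 1/n² = π²/6 < 2π and the partial sums are strictly increasing). -/
open Filter Metric Set

open Topology
open scoped Real

/-!
A rotation of the circle by `c` moves every point by exactly `‖c‖`, so rotations by angles
`1 / n² → 0` converge uniformly to the identity. The composite `ω_k` is the rotation by the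
partial sum `∑_{n ≤ k} 1 / n²`, which lies in `(0, π² / 6] ⊂ (0, 2π)` for `k ≥ 1`; hence no
`ω_k` returns a single point to itself.
-/

theorem omega_add_const {G : Type*} [AddCommMonoid G] (c : ℕ → G) (m : ℕ) (x : G) :
    omega (fun n y => y + c n) m x = x + ∑ i ∈ Finset.range m, c (i + 1) := by
  induction m with
  | zero => simp [omega]
  | succ m ih => simp [omega, ih, Finset.sum_range_succ, add_assoc]

theorem tendstoUniformly_add_const_id {G : Type*} [SeminormedAddCommGroup G] {c : ℕ → G}
    (hc : Tendsto c atTop (𝓝 0)) : TendstoUniformly (fun n x => x + c n) id atTop := by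
  rw [Metric.tendstoUniformly_iff]
  intro ε hε
  filter_upwards [Metric.tendsto_nhds.1 hc ε hε] with n hn x
  simpa [dist_eq_norm] using hn

theorem AddCircle.coe_ne_zero_of_pos_of_lt {𝕜 : Type*} [AddCommGroup 𝕜] [LinearOrder 𝕜]
    [IsOrderedAddMonoid 𝕜] [Archimedean 𝕜] {p x : 𝕜} (hx : 0 < x) (hxp : x < p) :
    (x : AddCircle p) ≠ 0 := by
  have : Fact (0 < p) := ⟨hx.trans hxp⟩
  rw [Ne, AddCircle.coe_eq_zero_iff_of_mem_Ico ⟨hx.le, hxp⟩]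
  exact hx.ne'

theorem sum_range_one_div_succ_sq_le (m : ℕ) :
    ∑ i ∈ Finset.range m, 1 / ((i + 1 : ℕ) : ℝ) ^ 2 ≤ π ^ 2 / 6 := by
  have := sum_le_hasSum (Finset.range (m + 1)) (fun _ _ => by positivity) hasSum_zeta_two
  simpa [Finset.sum_range_succ'] using this

theorem stmt15 :
    ∃ fn : ℕ → AddCircle (2 * Real.pi) → AddCircle (2 * Real.pi),
      (∀ n θ, fn n θ = θ + ((1 / (n : ℝ) ^ 2 : ℝ) : AddCircle (2 * Real.pi))) ∧
      TendstoUniformly fn id atTop ∧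
      (∀ θ : AddCircle (2 * Real.pi), ∃ k : ℕ, 1 ≤ k ∧ id^[k] θ = θ) ∧
      ¬∃ θ : AddCircle (2 * Real.pi), ∃ k : ℕ, 1 ≤ k ∧
        ∀ n : ℕ, 1 ≤ n → omega fn (n * k) θ = θ := by
  set s : ℕ → ℝ := fun n => 1 / (n : ℝ) ^ 2
  have hs : Tendsto (fun n => (s n : AddCircle (2 * π))) atTop (𝓝 0) := by
    have := ((AddCircle.continuous_mk' (2 * π)).tendsto 0).comp
      hasSum_zeta_two.summable.tendsto_atTop_zero
    rwa [map_zero] at this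
  refine ⟨fun n θ => θ + (s n : AddCircle (2 * π)), fun _ _ => rfl,
    tendstoUniformly_add_const_id hs, fun θ => ⟨1, le_rfl, rfl⟩, ?_⟩
  rintro ⟨θ, k, hk, hper⟩
  have hret := hper 1 le_rfl
  rw [one_mul, omega_add_const, add_eq_left] at hret
  have hcoe : ((∑ i ∈ Finset.range k, s (i + 1) : ℝ) : AddCircle (2 * π)) = 0 :=
    (map_sum (QuotientAddGroup.mk' (AddSubgroup.zmultiples (2 * π))) _ _).trans hret
  refine AddCircle.coe_ne_zero_of_pos_of_lt ?_ ?_ hcoe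
  · exact Finset.sum_pos (fun i _ => by positivity) (Finset.nonempty_range_iff.2 (by omega))
  · calc _ ≤ π ^ 2 / 6 := by simpa [s] using sum_range_one_div_succ_sq_le k
      _ < 2 * π := by nlinarith [Real.pi_pos, Real.pi_lt_four]
end

section
/- Let (X, F) be a sensitive non-autonomous system on a compact metric space. Then for every x ∈ X, the proximal cell Prox_F(x) = {y : liminf_{n→∞} d(ω_n(x), ω_n(y)) = 0} is dense in X if and only if the Li–Yorke cell LY_F(x) = {y : liminf_{n→∞} d(ω_n(x), ω_n(y)) = 0 and limsup_{n→∞} d(ω_n(x), ω_n(y)) > 0} is dense in X. -/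
open Filter Metric Set

theorem stmt16 {X : Type*} [MetricSpace X] [CompactSpace X] [Nonempty X]
    (fn : ℕ → X → X) (hfn : ∀ n, Continuous (fn n))
    (hsens : ∃ δ > 0, ∀ x : X, ∀ U ∈ nhds x, ∃ y ∈ U, ∃ n : ℕ,
      δ < dist (omega fn n x) (omega fn n y)) :
    ∀ x : X,
      Dense {y : X | Filter.liminf (fun n : ℕ => dist (omega fn n x) (omega fn n y)) atTop = 0} ↔
      Dense {y : X |
        Filter.liminf (fun n : ℕ => dist (omega fn n x) (omega fn n y)) atTop = 0 ∧
        0 < Filter.limsup (fun n : ℕ => dist (omega fn n x) (omega fn n y)) atTop} := by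
  obtain ⟨δ, hδ, hs⟩ := hsens
  -- continuity of the compositions
  have homega : ∀ n, Continuous (omega fn n) := by
    intro n
    induction n with
    | zero => exact continuous_id
    | succ k ih => exact (hfn (k + 1)).comp ih
  -- a uniform bound on distances
  obtain ⟨C, hC⟩ : ∃ C, ∀ a b : X, dist a b ≤ C := by
    obtain ⟨C, hC⟩ := Metric.isBounded_iff.mp (isCompact_univ (X := X)).isBounded
    exact ⟨C, fun a b => hC (mem_univ a) (mem_univ b)⟩
  intro x
  have hbdd_le : ∀ y : X, IsBoundedUnder (· ≤ ·) atTop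
      (fun n : ℕ => dist (omega fn n x) (omega fn n y)) :=
    fun y => isBoundedUnder_of ⟨C, fun n => hC _ _⟩
  have hbdd_ge : ∀ y : X, IsBoundedUnder (· ≥ ·) atTop
      (fun n : ℕ => dist (omega fn n x) (omega fn n y)) :=
    fun y => isBoundedUnder_of ⟨0, fun n => dist_nonneg⟩
  constructor
  · -- main direction: proximal cell dense → Li–Yorke cell dense
    intro hP
    -- refined sensitivity: the separation time can be taken arbitrarily large
    have hsens' : ∀ p : X, ∀ V : Set X, IsOpen V → p ∈ V → ∀ N : ℕ,
        ∃ y ∈ V, ∃ n, N ≤ n ∧ δ < dist (omega fn n p) (omega fn n y) := by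
      intro p V hV hpV N
      set W : Set X := ⋂ m ∈ Finset.range (N + 1),
        {y : X | dist (omega fn m p) (omega fn m y) < δ} with hW
      have hWopen : IsOpen W := isOpen_biInter_finset fun m _ =>
        isOpen_lt (continuous_const.dist (homega m)) continuous_const
      have hpW : p ∈ W := by
        simp only [hW, mem_iInter, mem_setOf_eq]
        intro m _
        simpa using hδ
      obtain ⟨y, hy, n, hn⟩ := hs p (V ∩ W) ((hV.inter hWopen).mem_nhds ⟨hpV, hpW⟩)
      refine ⟨y, hy.1, n, ?_, hn⟩
      by_contra hcon
      push_neg at hcon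
      have hyW := hy.2
      simp only [hW, mem_iInter, mem_setOf_eq] at hyW
      have := hyW n (Finset.mem_range.mpr (by omega))
      linarith
    -- the open sets used in the Baire argument
    set O : ℕ → Set X := fun k =>
      ⋃ n, ⋃ _ : k ≤ n, {y : X | dist (omega fn n x) (omega fn n y) < 1 / (k + 1)} with hO
    set P : ℕ → Set X := fun k =>
      ⋃ n, ⋃ _ : k ≤ n, {y : X | δ / 2 < dist (omega fn n x) (omega fn n y)} with hPdef
    have hOopen : ∀ k, IsOpen (O k) := fun k =>
      isOpen_iUnion fun n => isOpen_iUnion fun _ =>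
        isOpen_lt (continuous_const.dist (homega n)) continuous_const
    have hPopen : ∀ k, IsOpen (P k) := fun k =>
      isOpen_iUnion fun n => isOpen_iUnion fun _ =>
        isOpen_lt continuous_const (continuous_const.dist (homega n))
    have hOdense : ∀ k, Dense (O k) := by
      intro k
      apply hP.mono
      intro y hy
      have hcb : IsCoboundedUnder (· ≥ ·) atTop
          (fun n : ℕ => dist (omega fn n x) (omega fn n y)) :=
        (hbdd_le y).isCoboundedUnder_ge
      have hlim : Filter.liminf
          (fun n : ℕ => dist (omega fn n x) (omega fn n y)) atTop < 1 / (k + 1) := by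
        rw [hy]; positivity
      have hfreq := Filter.frequently_lt_of_liminf_lt hcb hlim
      rw [frequently_atTop] at hfreq
      obtain ⟨n, hn, hlt⟩ := hfreq k
      exact mem_iUnion.mpr ⟨n, mem_iUnion.mpr ⟨hn, hlt⟩⟩
    have hPdense : ∀ k, Dense (P k) := by
      intro k
      rw [dense_iff_inter_open]
      rintro V hV ⟨p, hp⟩
      by_cases hcase : ∃ n, k ≤ n ∧ δ / 2 < dist (omega fn n x) (omega fn n p)
      · obtain ⟨n, hn, h⟩ := hcase
        exact ⟨p, hp, mem_iUnion.mpr ⟨n, mem_iUnion.mpr ⟨hn, h⟩⟩⟩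
      · push_neg at hcase
        obtain ⟨y, hyV, n, hn, hgt⟩ := hsens' p V hV hp k
        have h1 := hcase n hn
        have h2 := dist_triangle (omega fn n p) (omega fn n x) (omega fn n y)
        have h3 : dist (omega fn n p) (omega fn n x)
            = dist (omega fn n x) (omega fn n p) := dist_comm _ _
        have h4 : δ / 2 < dist (omega fn n x) (omega fn n y) := by linarith
        exact ⟨y, hyV, mem_iUnion.mpr ⟨n, mem_iUnion.mpr ⟨hn, h4⟩⟩⟩
    have hG : Dense (⋂ k, O k ∩ P k) :=
      dense_iInter_of_isOpen (fun k => (hOopen k).inter (hPopen k))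
        (fun k => (hOdense k).inter_of_isOpen_left (hPdense k) (hOopen k))
    apply hG.mono
    intro y hy
    simp only [mem_iInter] at hy
    have hyO : ∀ k : ℕ, ∃ n, k ≤ n ∧
        dist (omega fn n x) (omega fn n y) < 1 / (k + 1) := by
      intro k
      have := (hy k).1
      simp only [hO, mem_iUnion, mem_setOf_eq] at this
      obtain ⟨n, hn, h⟩ := this
      exact ⟨n, hn, h⟩
    have hyP : ∀ k : ℕ, ∃ n, k ≤ n ∧
        δ / 2 < dist (omega fn n x) (omega fn n y) := by
      intro k
      have := (hy k).2
      simp only [hPdef, mem_iUnion, mem_setOf_eq] at this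
      obtain ⟨n, hn, h⟩ := this
      exact ⟨n, hn, h⟩
    constructor
    · -- liminf = 0
      have hge : (0 : ℝ) ≤ Filter.liminf
          (fun n : ℕ => dist (omega fn n x) (omega fn n y)) atTop :=
        Filter.le_liminf_of_le ((hbdd_le y).isCoboundedUnder_ge)
          (Eventually.of_forall fun n => dist_nonneg)
      have hle : ∀ ε : ℝ, 0 < ε → Filter.liminf
          (fun n : ℕ => dist (omega fn n x) (omega fn n y)) atTop ≤ ε := by
        intro ε hε
        obtain ⟨K, hK⟩ := exists_nat_one_div_lt hε
        refine Filter.liminf_le_of_frequently_le ?_ (hbdd_ge y)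
        rw [frequently_atTop]
        intro a
        obtain ⟨n, hn, hlt⟩ := hyO (max a K)
        refine ⟨n, le_trans (le_max_left a K) hn, le_of_lt (lt_trans (lt_of_lt_of_le hlt ?_) hK)⟩
        apply one_div_le_one_div_of_le
        · positivity
        · have : (K : ℝ) ≤ (max a K : ℕ) := by exact_mod_cast le_max_right a K
          linarith
      refine le_antisymm ?_ hge
      by_contra hcon
      push_neg at hcon
      have := hle (Filter.liminf
          (fun n : ℕ => dist (omega fn n x) (omega fn n y)) atTop / 2) (by linarith)
      linarith
    · -- limsup > 0
      have : δ / 2 ≤ Filter.limsup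
          (fun n : ℕ => dist (omega fn n x) (omega fn n y)) atTop := by
        refine Filter.le_limsup_of_frequently_le ?_ (hbdd_le y)
        rw [frequently_atTop]
        intro a
        obtain ⟨n, hn, h⟩ := hyP a
        exact ⟨n, hn, le_of_lt h⟩
      linarith
  · -- trivial direction
    intro hLY
    exact hLY.mono fun y hy => hy.1
end

section
/- If each f_n commutes with f and Σ_{n=1}^∞ D(f_n, f) < ∞, then every pair (x, y) proximal for (X, f) (i.e., liminf_{n→∞} d(f^n(x), f^n(y)) = 0) is proximal for (X, F) (i.e., liminf_{n→∞} d(ω_n(x), ω_n(y)) = 0). -/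
open Filter Metric Set

section Aux

variable {X : Type*} [MetricSpace X] [CompactSpace X] [Nonempty X]

theorem supD_le_aux (g h : X → X) (hg : Continuous g) (hh : Continuous h) (z : X) :
    dist (g z) (h z) ≤ supD g h := by
  apply le_ciSup (f := fun x => dist (g x) (h x))
  have : BddAbove ((fun x => dist (g x) (h x)) '' Set.univ) :=
    isCompact_univ.bddAbove_image ((hg.dist hh).continuousOn)
  rwa [Set.image_univ] at this

theorem fn_comm_iterate_aux {f : X → X} {fn : ℕ → X → X}
    (hcomm : ∀ n, fn n ∘ f = f ∘ fn n) (j k : ℕ) (z : X) :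
    fn j (f^[k] z) = f^[k] (fn j z) := by
  induction k generalizing z with
  | zero => simp
  | succ k ih =>
    rw [Function.iterate_succ_apply, Function.iterate_succ_apply, ih (f z)]
    congr 1
    exact congrFun (hcomm j) z

theorem omega_comm_iterate_aux {f : X → X} {fn : ℕ → X → X}
    (hcomm : ∀ n, fn n ∘ f = f ∘ fn n) (q r : ℕ) (z : X) :
    omega fn q (f^[r] z) = f^[r] (omega fn q z) := by
  induction q with
  | zero => simp [omega]
  | succ q ih =>
    show fn (q + 1) (omega fn q (f^[r] z)) = f^[r] (fn (q + 1) (omega fn q z))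
    rw [ih, fn_comm_iterate_aux hcomm]

theorem omega_continuous_aux {fn : ℕ → X → X} (hfn : ∀ n, Continuous (fn n)) (q : ℕ) :
    Continuous (omega fn q) := by
  induction q with
  | zero => exact continuous_id
  | succ q ih => exact (hfn (q + 1)).comp ih

end Aux

theorem stmt17 {X : Type*} [MetricSpace X] [CompactSpace X] [Nonempty X]
    (f : X → X) (fn : ℕ → X → X)
    (hf : Continuous f) (hfn : ∀ n, Continuous (fn n))
    (hcomm : ∀ n, fn n ∘ f = f ∘ fn n)
    (hsum : Summable fun n => supD (fn (n + 1)) f)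
    (x y : X)
    (hprox : Filter.liminf (fun n : ℕ => dist (f^[n] x) (f^[n] y)) atTop = 0) :
    Filter.liminf (fun n : ℕ => dist (omega fn n x) (omega fn n y)) atTop = 0 := by
  set D : ℕ → ℝ := fun n => supD (fn (n + 1)) f with hD
  -- distances are bounded above by some constant
  obtain ⟨c₀⟩ : Nonempty X := inferInstance
  obtain ⟨R, hR⟩ := (isBounded_iff_subset_closedBall c₀).mp isCompact_univ.isBounded
  have hdistle : ∀ a b : X, dist a b ≤ R + R := by
    intro a b
    calc dist a b ≤ dist a c₀ + dist c₀ b := dist_triangle _ _ _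
    _ ≤ R + R := by
      have ha := hR (Set.mem_univ a); have hb := hR (Set.mem_univ b)
      rw [Metric.mem_closedBall] at ha hb
      rw [dist_comm c₀ b] at *
      linarith
  -- one-step inequality
  have step : ∀ m k : ℕ,
      dist (f^[k] (omega fn (m + 1) x)) (f^[k] (omega fn (m + 1) y)) ≤
      dist (f^[k + 1] (omega fn m x)) (f^[k + 1] (omega fn m y)) + 2 * D m := by
    intro m k
    have hx1 : f^[k] (omega fn (m + 1) x) = fn (m + 1) (f^[k] (omega fn m x)) := by
      show f^[k] (fn (m + 1) (omega fn m x)) = _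
      rw [fn_comm_iterate_aux hcomm]
    have hy1 : f^[k] (omega fn (m + 1) y) = fn (m + 1) (f^[k] (omega fn m y)) := by
      show f^[k] (fn (m + 1) (omega fn m y)) = _
      rw [fn_comm_iterate_aux hcomm]
    rw [hx1, hy1]
    set a := f^[k] (omega fn m x)
    set b := f^[k] (omega fn m y)
    have h4 : dist (fn (m + 1) a) (fn (m + 1) b) ≤
        dist (fn (m + 1) a) (f a) + dist (f a) (f b) + dist (f b) (fn (m + 1) b) :=
      dist_triangle4 _ _ _ _
    have h5 : dist (fn (m + 1) a) (f a) ≤ D m := supD_le_aux _ _ (hfn _) hf a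
    have h6 : dist (f b) (fn (m + 1) b) ≤ D m := by
      rw [dist_comm]; exact supD_le_aux _ _ (hfn _) hf b
    have h7 : f a = f^[k + 1] (omega fn m x) := (Function.iterate_succ_apply' f k _).symm
    have h8 : f b = f^[k + 1] (omega fn m y) := (Function.iterate_succ_apply' f k _).symm
    rw [h7, h8] at h4
    rw [h7] at h5
    rw [h8] at h6
    linarith
  -- telescoped inequality
  have tele : ∀ r q k : ℕ,
      dist (f^[k] (omega fn (q + r) x)) (f^[k] (omega fn (q + r) y)) ≤
      dist (f^[k + r] (omega fn q x)) (f^[k + r] (omega fn q y)) +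
        2 * ∑ i ∈ Finset.range r, D (q + i) := by
    intro r
    induction r with
    | zero => intro q k; simp
    | succ r ih =>
      intro q k
      have h1 := step (q + r) k
      have h2 := ih q (k + 1)
      have hk2 : k + 1 + r = k + (r + 1) := by ring
      rw [hk2] at h2
      have hqr : q + (r + 1) = q + r + 1 := by ring
      rw [hqr, Finset.sum_range_succ]
      linarith
  -- nonnegativity of D
  have hDnn : ∀ n, 0 ≤ D n := fun n =>
    le_trans dist_nonneg (supD_le_aux _ _ (hfn _) hf c₀)
  -- partial sums converge
  have htend := hsum.hasSum.tendsto_sum_nat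
  set L := ∑' n, D n with hL
  -- key frequently statement
  have hfreq : ∀ ε : ℝ, 0 < ε → ∀ N : ℕ, ∃ n, N ≤ n ∧
      dist (omega fn n x) (omega fn n y) < ε := by
    intro ε hε N
    -- choose q ≥ N with small tails
    have h8 : (0 : ℝ) < ε / 8 := by linarith
    obtain ⟨M, hM⟩ := (Metric.tendsto_atTop.mp htend) (ε / 8) h8
    set q := max N M with hq
    have hqM : M ≤ q := le_max_right _ _
    have htail : ∀ r : ℕ, ∑ i ∈ Finset.range r, D (q + i) < ε / 4 := by
      intro r
      have e1 : ∑ i ∈ Finset.range (q + r), D i =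
          (∑ i ∈ Finset.range q, D i) + ∑ i ∈ Finset.range r, D (q + i) :=
        Finset.sum_range_add D q r
      have h2 := hM q hqM
      have h3 := hM (q + r) (le_trans hqM (Nat.le_add_right _ _))
      rw [Real.dist_eq] at h2 h3
      have := abs_lt.mp h2
      have := abs_lt.mp h3
      have e2 : ∑ i ∈ Finset.range r, D (q + i) =
          (∑ i ∈ Finset.range (q + r), D i) - ∑ i ∈ Finset.range q, D i := by
        rw [e1]; ring
      rw [e2]
      linarith [abs_lt.mp h2, abs_lt.mp h3]
    -- uniform continuity of omega fn q
    have hcont : Continuous (omega fn q) := omega_continuous_aux hfn q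
    have hUC : UniformContinuous (omega fn q) :=
      CompactSpace.uniformContinuous_of_continuous hcont
    obtain ⟨δ, hδpos, hδ⟩ := (Metric.uniformContinuous_iff.mp hUC) (ε / 2) (by linarith)
    -- frequently the f-orbit distances are < δ
    have hcb : IsCoboundedUnder (· ≥ ·) atTop (fun n : ℕ => dist (f^[n] x) (f^[n] y)) :=
      Filter.IsBoundedUnder.isCoboundedUnder_ge
        (Filter.isBoundedUnder_of ⟨R + R, fun n => hdistle _ _⟩)
    have hfr : ∃ᶠ n in atTop, dist (f^[n] x) (f^[n] y) < δ := by
      apply Filter.frequently_lt_of_liminf_lt hcb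
      rw [hprox]; exact hδpos
    obtain ⟨r, -, hr⟩ := (Filter.frequently_atTop.mp hfr) 0
    refine ⟨q + r, le_trans (le_max_left N M) (Nat.le_add_right _ _), ?_⟩
    have h1 := tele r q 0
    simp only [Nat.zero_add, Function.iterate_zero, id_eq] at h1
    have h3 : dist (f^[r] (omega fn q x)) (f^[r] (omega fn q y)) < ε / 2 := by
      rw [← omega_comm_iterate_aux hcomm, ← omega_comm_iterate_aux hcomm]
      exact hδ hr
    have h4 := htail r
    calc dist (omega fn (q + r) x) (omega fn (q + r) y) ≤
        dist (f^[r] (omega fn q x)) (f^[r] (omega fn q y)) +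
          2 * ∑ i ∈ Finset.range r, D (q + i) := h1
      _ < ε / 2 + 2 * (ε / 4) := by linarith
      _ = ε := by ring
  -- conclude liminf = 0
  apply le_antisymm
  · have hbd2 : IsBoundedUnder (· ≥ ·) atTop
        (fun n : ℕ => dist (omega fn n x) (omega fn n y)) := by
      refine ⟨0, ?_⟩
      simp only [Filter.eventually_map]
      exact Filter.Eventually.of_forall fun n => dist_nonneg
    have : ∀ ε : ℝ, 0 < ε →
        liminf (fun n : ℕ => dist (omega fn n x) (omega fn n y)) atTop ≤ ε := by
      intro ε hε
      apply Filter.liminf_le_of_frequently_le _ hbd2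
      rw [Filter.frequently_atTop]
      intro N
      obtain ⟨n, hn, hlt⟩ := hfreq ε hε N
      exact ⟨n, hn, le_of_lt hlt⟩
    apply le_of_forall_pos_le_add
    intro ε hε
    simpa using this ε hε
  · apply Filter.le_liminf_of_le
    · exact Filter.IsBoundedUnder.isCoboundedUnder_ge
        (Filter.isBoundedUnder_of ⟨R + R, fun n => hdistle _ _⟩)
    · exact Filter.Eventually.of_forall fun n => dist_nonneg
end
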